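/- Let T be a tree on a finite nonempty vertex type V with n = |V| vertices. Then the sum over all ordered pairs (u,v) of vertices of deg_T(u)·deg_T(v)·dist_T(u,v) equals 8·W(T) − 2(n−1)(2n−1); equivalently, the multiplicative degree Wiener index W*(T) = (1/2)·Σ_{u,v} deg_T(u)·deg_T(v)·dist_T(u,v) equals 4·W(T) − (n−1)(2n−1). -/

import Mathlib

/-!
Root the tree at `u`. Every vertex `v ≠ u` has exactly one neighbour closer to `u`, its parent,
and by `IsTree.dist_eq_dist_add_one_of_adj` every edge joins a vertex to its parent. Counting every
edge from both ends gives `∑ v, deg v * d(u, v) = ∑ v ≠ u, (2 * d(u, v) - 1)`, that is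
`2 * ∑ v, d(u, v) - (n - 1)`. Multiplying by `deg u`, summing over `u`, and using the same identity
once more (with `u` and `v` swapped) together with `∑ v, deg v = 2 * (n - 1)` gives the formula.
-/

/-- The Wiener index of a finite simple graph: half the sum of the graph
distances over all ordered pairs of vertices. -/
noncomputable def wienerIndex {V : Type*} [Fintype V] (G : SimpleGraph V) : ℚ :=
  (∑ u : V, ∑ v : V, (G.dist u v : ℚ)) / 2

open Finset

namespace SimpleGraph

variable {V : Type*} {G : SimpleGraph V}

lemma IsTree.existsUnique_adj_dist_add_one (hG : G.IsTree) (u : V) {v : V} (hv : v ≠ u) :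
    ∃! w, G.Adj v w ∧ G.dist u w + 1 = G.dist u v := by
  obtain ⟨p, hp, hpl⟩ := hG.connected.exists_path_of_dist v u
  have hnil : ¬ p.Nil := Walk.not_nil_of_ne hv
  refine ⟨p.snd, ⟨p.adj_snd hnil, ?_⟩, ?_⟩
  · have hsnd : G.dist u p.snd ≤ p.tail.length := dist_comm (G := G) ▸ dist_le p.tail
    have hlen := p.length_tail_add_one hnil
    have hstep := hG.dist_eq_dist_add_one_of_adj u (p.adj_snd hnil)
    rw [dist_comm] at hpl
    omega
  · rintro w ⟨hadj, hw⟩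
    obtain ⟨q, -, hql⟩ := hG.connected.exists_path_of_dist w u
    have hpath : (Walk.cons hadj q).IsPath :=
      Walk.isPath_of_length_eq_dist _ (by rw [Walk.length_cons, hql, dist_comm, hw, dist_comm])
    have hpq := (hG.isAcyclic.subsingleton_path v u).elim ⟨_, hpath⟩ ⟨p, hp⟩
    simpa using congrArg (fun r : G.Path v u ↦ r.1.snd) hpq

lemma IsTree.sum_sum_ite_adj_dist_add_one {M : Type*} [AddCommGroup M] [Fintype V]
    [DecidableRel G.Adj] (hG : G.IsTree) (u : V) (f : V → M) :
    ∑ v, ∑ w, (if G.Adj v w ∧ G.dist u w + 1 = G.dist u v then f v else 0) = ∑ v, f v - f u := by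
  classical
  have hinner : ∀ v, ∑ w, (if G.Adj v w ∧ G.dist u w + 1 = G.dist u v then f v else 0) =
      if v = u then 0 else f v := by
    intro v
    split_ifs with hv
    · subst hv
      exact sum_eq_zero fun w _ ↦ if_neg (by simp)
    · obtain ⟨w₀, hw₀, huniq⟩ := hG.existsUnique_adj_dist_add_one u hv
      rw [Fintype.sum_eq_single w₀ fun w hw ↦ if_neg fun h ↦ hw (huniq w h), if_pos hw₀]
  simp [hinner, sum_ite, filter_ne', sum_erase_eq_sub]

theorem IsTree.sum_degree_mul_dist {R : Type*} [CommRing R] [Fintype V] [DecidableRel G.Adj]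
    (hG : G.IsTree) (u : V) :
    ∑ v, (G.degree v : R) * G.dist u v = 2 * ∑ v, (G.dist u v : R) - (Fintype.card V - 1) := by
  classical
  have hsplit : ∀ v w, (if G.Adj v w then (G.dist u v : R) else 0) =
      (if G.Adj v w ∧ G.dist u w + 1 = G.dist u v then (G.dist u v : R) else 0) +
      (if G.Adj w v ∧ G.dist u v + 1 = G.dist u w then (G.dist u w : R) - 1 else 0) := by
    intro v w
    by_cases hadj : G.Adj v w
    · rcases hG.dist_eq_dist_add_one_of_adj u hadj with h | h
      · rw [if_pos hadj, if_pos ⟨hadj, h.symm⟩, if_neg fun ⟨_, h'⟩ ↦ by omega, add_zero]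
      · rw [if_pos hadj, if_neg fun ⟨_, h'⟩ ↦ by omega, if_pos ⟨hadj.symm, h.symm⟩, h]
        push_cast
        ring
    · rw [if_neg hadj, if_neg fun h ↦ hadj h.1, if_neg fun h ↦ hadj h.1.symm, add_zero]
  calc ∑ v, (G.degree v : R) * G.dist u v
      = ∑ v, ∑ w, (if G.Adj v w then (G.dist u v : R) else 0) := by
        simp [degree, neighborFinset_eq_filter, sum_ite]
    _ = 2 * ∑ v, (G.dist u v : R) - (Fintype.card V - 1) := by
        simp only [hsplit, sum_add_distrib]
        rw [sum_comm (f := fun v w ↦ if G.Adj w v ∧ _ then _ else _),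
          hG.sum_sum_ite_adj_dist_add_one, hG.sum_sum_ite_adj_dist_add_one]
        simp only [dist_self, Nat.cast_zero, sum_sub_distrib, sum_const, card_univ, nsmul_eq_mul,
          mul_one]
        ring

theorem IsTree.sum_degree {R : Type*} [CommRing R] [Fintype V] [DecidableRel G.Adj]
    (hG : G.IsTree) : ∑ v, (G.degree v : R) = 2 * (Fintype.card V - 1) := by
  classical
  rw [← hG.card_edgeFinset, ← Nat.cast_sum, sum_degrees_eq_twice_card_edges]
  push_cast
  ring

theorem IsTree.sum_degree_mul_sum_dist {R : Type*} [CommRing R] [Fintype V] [DecidableRel G.Adj]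
    (hG : G.IsTree) :
    ∑ u, (G.degree u : R) * ∑ v, (G.dist u v : R) =
      2 * ∑ u, ∑ v, (G.dist u v : R) - Fintype.card V * (Fintype.card V - 1) := by
  calc ∑ u, (G.degree u : R) * ∑ v, (G.dist u v : R)
      = ∑ v, ∑ u, (G.degree u : R) * G.dist v u := by
        simp_rw [mul_sum]
        rw [sum_comm]
        exact sum_congr rfl fun v _ ↦ sum_congr rfl fun u _ ↦ by rw [dist_comm]
    _ = _ := by
        simp only [hG.sum_degree_mul_dist, mul_sum, sum_sub_distrib, sum_const, card_univ,
          nsmul_eq_mul, mul_one]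
        ring

end SimpleGraph

theorem multiplicative_degree_wiener {V : Type*} [Fintype V]
    (T : SimpleGraph V) [DecidableRel T.Adj] (hT : T.IsTree) :
    ∑ u : V, ∑ v : V, (T.degree u : ℚ) * (T.degree v : ℚ) * (T.dist u v : ℚ) =
      8 * wienerIndex T
        - 2 * ((Fintype.card V : ℚ) - 1) * (2 * (Fintype.card V : ℚ) - 1) := by
  calc ∑ u : V, ∑ v : V, (T.degree u : ℚ) * (T.degree v : ℚ) * (T.dist u v : ℚ)
      = ∑ u, (T.degree u : ℚ) * ∑ v, (T.degree v : ℚ) * T.dist u v := by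
        simp_rw [mul_sum, mul_assoc]
    _ = 2 * ∑ u, (T.degree u : ℚ) * ∑ v, (T.dist u v : ℚ)
          - (Fintype.card V - 1) * ∑ u, (T.degree u : ℚ) := by
        simp_rw [hT.sum_degree_mul_dist]
        rw [mul_sum, mul_sum, ← sum_sub_distrib]
        exact sum_congr rfl fun u _ ↦ by ring
    _ = _ := by
        rw [hT.sum_degree_mul_sum_dist, hT.sum_degree, wienerIndex]
        ring
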